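/- arXiv:2512.06162 — 4 statements merged into one kernel-verified Lean document; each statement's English description precedes it below -/
import Mathlib

section
/- Let $C_{p_1,\dots,p_l} = \frac{l!}{2^{\sum_k p_k} \prod_k p_k! \prod_k k^{p_k}}$ for nonnegative integers $p_1,\dots,p_l$ with $p_1+2p_2+\dots+lp_l=l$. Then these coefficients satisfy the recursion $C_{p_1,p_2,\dots,p_l} = \tfrac12 C_{p_1-1,p_2,\dots,p_{l-1}} + \sum_{n=1}^{l-1} n(p_n+1)\, C_{p_1,\dots,p_{n-1},p_n+1,p_{n+1}-1,p_{n+2},\dots,p_{l-1}}$, with initial value $C_0=1$ (terms with a negative index are zero). -/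
open Finset

/-- The coefficient `C_{p_1,…,p_l} = l! / (2^{∑ p_k} ∏ p_k! ∏ k^{p_k})`,
where the multi-index is encoded as `p : ℕ → ℕ` with `p (k-1)` playing the
role of the paper's `p_k` (only the first `l` values are read). -/
noncomputable def Ccoef (l : ℕ) (p : ℕ → ℕ) : ℚ :=
  (Nat.factorial l : ℚ) /
    (2 ^ (∑ k ∈ Finset.range l, p k) *
      (∏ k ∈ Finset.range l, ((p k).factorial : ℚ)) *
      ∏ k ∈ Finset.range l, ((k : ℚ) + 1) ^ p k)

/-!
Write `Ccoef l p = l! / ∏_{k<l} w k (p k)` with `w k x = 2^x x! (k+1)^x` (`cycleWeight`), the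
factor contributed by `x` parts of size `k+1`. Removing a part of size `1` divides the denominator
by `2 p 0`, and turning a part of size `n+1` into one of size `n` multiplies it by
`n (p (n-1) + 1) / ((n+1) p n)`. Hence, as long as `p (l-1) = 0` (so that the products over
`range l` and `range (l-1)` agree), the `n`-th term on the right is
`(l-1)! (n+1) p n / ∏_{k<l} w k (p k)`, and these terms add up to `Ccoef l p` because
`∑ (k+1) p k = l`. Otherwise `p` is a single part of size `l`, and both sides are `(l-1)!/2`.
-/

open Function Nat

theorem Finset.prod_apply_update_mul {ι α M : Type*} [CommMonoid M] [DecidableEq ι]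
    {s : Finset ι} {a : ι} (ha : a ∈ s) (g : ι → α → M) (p : ι → α) (x : α) :
    (∏ k ∈ s, g k (update p a x k)) * g a (p a) = (∏ k ∈ s, g k (p k)) * g a x := by
  simp_rw [apply_update g p a x, prod_update_of_mem ha, ← mul_prod_erase s _ ha,
    sdiff_singleton_eq_erase]
  ac_rfl

def cycleWeight (k x : ℕ) : ℚ := 2 ^ x * x ! * (k + 1) ^ x

lemma cycleWeight_pos (k x : ℕ) : 0 < cycleWeight k x := by
  unfold cycleWeight; positivity

@[simp] lemma cycleWeight_zero (k : ℕ) : cycleWeight k 0 = 1 := by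
  simp [cycleWeight]

lemma cycleWeight_succ (k x : ℕ) :
    cycleWeight k (x + 1) = 2 * (x + 1) * (k + 1) * cycleWeight k x := by
  simp only [cycleWeight, pow_succ, factorial_succ]; push_cast; ring

def cycleWeightProd (m : ℕ) (p : ℕ → ℕ) : ℚ := ∏ k ∈ range m, cycleWeight k (p k)

lemma cycleWeightProd_pos (m : ℕ) (p : ℕ → ℕ) : 0 < cycleWeightProd m p :=
  prod_pos fun k _ => cycleWeight_pos k (p k)

lemma Ccoef_eq_div_cycleWeightProd (m : ℕ) (p : ℕ → ℕ) :
    Ccoef m p = m ! / cycleWeightProd m p := by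
  simp only [Ccoef, cycleWeightProd, cycleWeight, prod_mul_distrib, prod_pow_eq_pow_sum]

lemma cycleWeightProd_update_mul {m a : ℕ} (ha : a < m) (p : ℕ → ℕ) (x : ℕ) :
    cycleWeightProd m (update p a x) * cycleWeight a (p a) =
      cycleWeightProd m p * cycleWeight a x :=
  prod_apply_update_mul (mem_range.2 ha) cycleWeight p x

lemma cycleWeightProd_succ_of_eq_zero {m : ℕ} {p : ℕ → ℕ} (hpm : p m = 0) :
    cycleWeightProd (m + 1) p = cycleWeightProd m p := by
  rw [cycleWeightProd, prod_range_succ, hpm, cycleWeight_zero, mul_one, cycleWeightProd]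

lemma Ccoef_of_single {m j : ℕ} (hj : j < m) {p : ℕ → ℕ} (hpj : p j = 1)
    (h0 : ∀ k < m, k ≠ j → p k = 0) : Ccoef m p = m ! / (2 * (j + 1)) := by
  have hprod : cycleWeightProd m p = 2 * (j + 1) := by
    rw [cycleWeightProd, prod_eq_single_of_mem j (mem_range.2 hj)
      fun k hk hkj => by rw [h0 k (mem_range.1 hk) hkj, cycleWeight_zero], hpj,
      cycleWeight_succ, cycleWeight_zero]
    ring
  rw [Ccoef_eq_div_cycleWeightProd, hprod]

lemma half_Ccoef_update_zero {m : ℕ} (hm : 0 < m) {p : ℕ → ℕ} {x : ℕ} (h0 : p 0 = x + 1) :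
    1 / 2 * Ccoef m (update p 0 x) = m ! * p 0 / cycleWeightProd m p := by
  have h := cycleWeightProd_update_mul hm p x
  rw [h0, cycleWeight_succ] at h
  have hprod : cycleWeightProd m p = 2 * (x + 1) * cycleWeightProd m (update p 0 x) :=
    mul_right_cancel₀ (cycleWeight_pos 0 x).ne' (by linear_combination -h)
  have := cycleWeightProd_pos m (update p 0 x)
  rw [Ccoef_eq_div_cycleWeightProd, hprod, h0]
  field_simp
  push_cast
  ring

lemma mul_Ccoef_update_update {m j : ℕ} (hj : j + 1 < m) {p : ℕ → ℕ} {y : ℕ}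
    (hy : p (j + 1) = y + 1) :
    (j + 1) * (p j + 1) * Ccoef m (update (update p j (p j + 1)) (j + 1) y) =
      m ! * ((j + 2) * p (j + 1)) / cycleWeightProd m p := by
  have h1 := cycleWeightProd_update_mul (m := m) (a := j) (by omega) p (p j + 1)
  have h2 := cycleWeightProd_update_mul hj (update p j (p j + 1)) y
  rw [cycleWeight_succ] at h1
  rw [update_of_ne (by omega), hy, cycleWeight_succ] at h2
  push_cast at h1 h2
  have hq : cycleWeightProd m (update p j (p j + 1)) =
      2 * (p j + 1) * (j + 1) * cycleWeightProd m p :=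
    mul_right_cancel₀ (cycleWeight_pos j (p j)).ne' (by linear_combination h1)
  have hq' : cycleWeightProd m (update (update p j (p j + 1)) (j + 1) y) *
      (2 * (y + 1) * (j + 2)) = cycleWeightProd m (update p j (p j + 1)) :=
    mul_right_cancel₀ (cycleWeight_pos (j + 1) y).ne' (by linear_combination h2)
  have := cycleWeightProd_pos m (update (update p j (p j + 1)) (j + 1) y)
  have := cycleWeightProd_pos m p
  rw [hq] at hq'
  rw [Ccoef_eq_div_cycleWeightProd, hy]
  field_simp
  push_cast
  linear_combination -hq' / 2

noncomputable def recursionRHS (m : ℕ) (p : ℕ → ℕ) : ℚ :=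
  (if 1 ≤ p 0 then (1 / 2 : ℚ) * Ccoef m (update p 0 (p 0 - 1)) else 0) +
    ∑ n ∈ Icc 1 m,
      (if 1 ≤ p n then
        (n : ℚ) * ((p (n - 1) : ℚ) + 1) *
          Ccoef m (update (update p (n - 1) (p (n - 1) + 1)) n (p n - 1))
      else 0)

lemma eq_one_and_eq_zero_of_sum_mul_eq {m : ℕ} {p : ℕ → ℕ}
    (hp : ∑ k ∈ range (m + 1), (k + 1) * p k = m + 1) (hpm : 0 < p m) :
    p m = 1 ∧ ∀ k < m, p k = 0 := by
  rw [sum_range_succ] at hp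
  have hpm1 : p m = 1 := by
    have : (m + 1) * p m ≤ (m + 1) * 1 := by omega
    have := Nat.le_of_mul_le_mul_left this m.succ_pos
    omega
  refine ⟨hpm1, fun k hk => ?_⟩
  have hrest : ∑ k ∈ range m, (k + 1) * p k = 0 := by rw [hpm1] at hp; omega
  simpa using (sum_eq_zero_iff.1 hrest) k (mem_range.2 hk)

lemma Ccoef_succ_eq_recursionRHS_of_pos {m : ℕ} {p : ℕ → ℕ}
    (hp : ∑ k ∈ range (m + 1), (k + 1) * p k = m + 1) (hpm : 0 < p m) :
    Ccoef (m + 1) p = recursionRHS m p := by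
  obtain ⟨hpm1, h0⟩ := eq_one_and_eq_zero_of_sum_mul_eq hp hpm
  have hlhs : Ccoef (m + 1) p = m ! / 2 := by
    rw [Ccoef_of_single (lt_add_one m) hpm1 fun k hk hkm => h0 k (by omega), factorial_succ]
    push_cast
    field_simp
  rw [hlhs, recursionRHS]
  rcases m with _ | j
  · simp [hpm1, Ccoef]
  · rw [if_neg (by simp [h0 0 (by omega)]), sum_eq_single_of_mem (j + 1) (by simp),
      if_pos (by omega)]
    · rw [add_tsub_cancel_right, h0 j (lt_add_one j),
        Ccoef_of_single (lt_add_one j) (by simp)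
          fun k hk hkj => by simp [hk.ne, hkj, h0 k hk]]
      push_cast
      field_simp
      ring
    · intro n hn hnj
      rw [if_neg (by rw [h0 n (by grind)]; omega)]

lemma Ccoef_succ_eq_recursionRHS_of_eq_zero {m : ℕ} {p : ℕ → ℕ}
    (hp : ∑ k ∈ range (m + 1), (k + 1) * p k = m + 1) (hpm : p m = 0) :
    Ccoef (m + 1) p = recursionRHS m p := by
  have hm : 0 < m := Nat.pos_of_ne_zero fun h => by subst h; simp [hpm] at hp
  set D := cycleWeightProd m p
  have hfirst : (if 1 ≤ p 0 then (1 / 2 : ℚ) * Ccoef m (update p 0 (p 0 - 1)) else 0) =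
      m ! * p 0 / D := by
    split_ifs with h
    · exact half_Ccoef_update_zero hm (by omega)
    · simp [show p 0 = 0 by omega]
  have hterm : ∀ n ∈ Icc 1 m, (if 1 ≤ p n then
      (n : ℚ) * ((p (n - 1) : ℚ) + 1) *
        Ccoef m (update (update p (n - 1) (p (n - 1) + 1)) n (p n - 1)) else 0) =
      m ! * ((n + 1) * p n) / D := by
    intro n hn
    obtain ⟨j, rfl⟩ : ∃ j, n = j + 1 := ⟨n - 1, by grind⟩
    split_ifs with h
    · have hjm : j + 1 < m := by grind
      push_cast
      rw [mul_Ccoef_update_update hjm (by omega : p (j + 1) = p (j + 1) - 1 + 1)]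
      ring
    · simp [show p (j + 1) = 0 by omega]
  have hmass : ((m : ℚ) + 1) = p 0 + ∑ n ∈ Icc 1 m, ((n : ℚ) + 1) * p n := by
    have := congrArg (Nat.cast (R := ℚ)) hp
    push_cast at this
    rw [← this, sum_range_eq_add_Ico _ (by omega : 0 < m + 1), Ico_add_one_right_eq_Icc]
    simp
  calc Ccoef (m + 1) p = m ! * ((m : ℚ) + 1) / D := by
        rw [Ccoef_eq_div_cycleWeightProd, cycleWeightProd_succ_of_eq_zero hpm, factorial_succ]
        push_cast
        ring
    _ = m ! * p 0 / D + ∑ n ∈ Icc 1 m, m ! * ((n + 1) * p n) / D := by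
        rw [hmass, ← sum_div, ← mul_sum, ← add_div, mul_add]
    _ = recursionRHS m p := by rw [recursionRHS, hfirst, sum_congr rfl hterm]

/-- The recursion for the coefficients `C`, with initial value `C_0 = 1`;
terms in which an index would become negative are interpreted as zero. -/
theorem stmt0 (l : ℕ) (hl : 1 ≤ l) (p : ℕ → ℕ)
    (hp : ∑ k ∈ Finset.range l, (k + 1) * p k = l) :
    (∀ q : ℕ → ℕ, Ccoef 0 q = 1) ∧
    Ccoef l p =
      (if 1 ≤ p 0 then (1 / 2 : ℚ) * Ccoef (l - 1) (Function.update p 0 (p 0 - 1)) else 0) +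
      ∑ n ∈ Finset.Icc 1 (l - 1),
        (if 1 ≤ p n then
          (n : ℚ) * ((p (n - 1) : ℚ) + 1) *
            Ccoef (l - 1)
              (Function.update (Function.update p (n - 1) (p (n - 1) + 1)) n (p n - 1))
        else 0) := by
  refine ⟨fun q => by simp [Ccoef], ?_⟩
  obtain ⟨m, rfl⟩ : ∃ m, l = m + 1 := ⟨l - 1, by omega⟩
  rcases Nat.eq_zero_or_pos (p m) with hpm | hpm
  · exact Ccoef_succ_eq_recursionRHS_of_eq_zero hp hpm
  · exact Ccoef_succ_eq_recursionRHS_of_pos hp hpm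
end

section
/- With $L_n$ defined as the polynomial $L_n = \sum_{p_1+2p_2+\dots+np_n=n} \frac{n!\,\Sigma_1^{p_1}\cdots\Sigma_n^{p_n}}{2^{\sum p_k}\prod p_k!\prod k^{p_k}}$ in the variables $\Sigma_k = (-y_0)^{-k}+(1-y_0)^{-k}+(x-y_0)^{-k}$, the partial derivative with respect to $y_0$ satisfies $\partial_{y_0} L_n = L_{n+1} - L_n L_1$. -/
open Finset

/-- `Σ_k = (-y)^{-k} + (1-y)^{-k} + (x-y)^{-k}`. -/
noncomputable def Sig (x y : ℂ) (k : ℕ) : ℂ :=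
  ((-y) ^ k)⁻¹ + ((1 - y) ^ k)⁻¹ + ((x - y) ^ k)⁻¹

/-- The Bell-type polynomial
`L_n = ∑_{p_1+2p_2+⋯+np_n=n} n! Σ_1^{p_1}⋯Σ_n^{p_n} / (2^{∑ p_k} ∏ p_k! ∏ k^{p_k})`,
the sum running over all nonnegative multi-indices `(p_1,…,p_n)` with
`p_1 + 2p_2 + ⋯ + n p_n = n` (encoded as `p : Fin n → ℕ`). -/
noncomputable def Lsum (x y : ℂ) (n : ℕ) : ℂ :=
  ∑ p ∈ (Fintype.piFinset fun _ : Fin n => Finset.range (n + 1)).filter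
      (fun p => ∑ i : Fin n, (i.1 + 1) * p i = n),
    (n.factorial : ℂ) * (∏ i : Fin n, Sig x y (i.1 + 1) ^ p i) /
      (2 ^ (∑ i : Fin n, p i) * (∏ i : Fin n, ((p i).factorial : ℂ)) *
        ∏ i : Fin n, ((i.1 : ℂ) + 1) ^ p i)

/-!
Write `L_n = n! Λ_n`, where `Λ_n` is the coefficient of `t^n` in
`exp (∑_k Σ_k t^k / (2k)) = ∏_k ∑_m (Σ_k t^k / (2k))^m / m!`, a sum over multiplicity vectors of
partitions of `n`. Removing one part `a + 1` from a partition of `n + 1` gives the recurrence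
`(n + 1) Λ_{n+1} = ∑_{a=0}^{n} Λ_{n-a} Σ_{a+1} / 2`. On the other hand `∂Σ_k = k Σ_{k+1}` turns
one part `k` into a part `k + 1`, which gives `∂Λ_n = ∑_{a=1}^{n} Λ_{n-a} Σ_{a+1} / 2`: the
recurrence without its `a = 0` term `Λ_n Σ_1 / 2 = Λ_n L_1`.
-/

open Function Nat

@[to_additive]
theorem prod_apply_update {ι α M : Type*} [Fintype ι] [DecidableEq ι] [CommMonoid M]
    (F : ι → α → M) (p : ι → α) (a : ι) (v : α) :
    ∏ i, F i (update p a v i) = F a v * ∏ i ∈ univ.erase a, F i (p i) := by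
  rw [← mul_prod_erase _ _ (mem_univ a), update_self]
  exact congrArg _ (prod_congr rfl fun i hi => by rw [update_of_ne (ne_of_mem_erase hi)])

def partitionMults (N n : ℕ) : Finset (Fin N → ℕ) :=
  (Fintype.piFinset fun _ : Fin N => range (n + 1)).filter
    (fun p => ∑ i : Fin N, (i.1 + 1) * p i = n)

theorem mem_partitionMults {N n : ℕ} {p : Fin N → ℕ} :
    p ∈ partitionMults N n ↔ ∑ i : Fin N, (i.1 + 1) * p i = n := by
  simp only [partitionMults, mem_filter, Fintype.mem_piFinset, mem_range, and_iff_right_iff_imp]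
  rintro rfl i
  calc p i ≤ (i.1 + 1) * p i := Nat.le_mul_of_pos_left _ i.1.succ_pos
    _ ≤ ∑ j : Fin N, (j.1 + 1) * p j :=
      single_le_sum (f := fun j : Fin N => (j.1 + 1) * p j) (fun _ _ => Nat.zero_le _) (mem_univ i)
    _ < _ := Nat.lt_succ_self _

theorem sum_partitionMults_filter_ne_zero {M : Type*} [AddCommMonoid M] {N n : ℕ} (a : Fin N)
    (ha : a.1 + 1 ≤ n) (f : (Fin N → ℕ) → M) :
    ∑ q ∈ partitionMults N n with q a ≠ 0, f q =
      ∑ r ∈ partitionMults N (n - (a.1 + 1)), f (update r a (r a + 1)) := by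
  have weighted (r : Fin N → ℕ) (v : ℕ) := sum_apply_update (fun i t => (i.1 + 1) * t) r a v
  have split (r : Fin N → ℕ) :=
    (add_sum_erase univ (fun i : Fin N => (i.1 + 1) * r i) (mem_univ a)).symm
  symm
  refine sum_nbij' (fun r => update r a (r a + 1)) (fun q => update q a (q a - 1))
    (fun r hr => ?_) (fun q hq => ?_) (fun r _ => ?_) (fun q hq => ?_) (fun _ _ => rfl)
  · simp only [mem_filter, mem_partitionMults, update_self] at hr ⊢
    rw [split] at hr
    rw [weighted, Nat.mul_succ]
    exact ⟨by omega, r a |>.succ_ne_zero⟩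
  · simp only [mem_filter, mem_partitionMults] at hq ⊢
    rw [weighted]
    rw [split] at hq
    obtain ⟨hq, hqa⟩ := hq
    obtain ⟨t, ht⟩ := Nat.exists_eq_succ_of_ne_zero hqa
    rw [ht, Nat.mul_succ] at hq
    rw [ht, Nat.succ_sub_one]
    omega
  · simp
  · rw [mem_filter] at hq
    simp [Nat.sub_add_cancel (Nat.pos_of_ne_zero hq.2)]

section Algebra

variable {K : Type*} [Field K] (s : ℕ → K)

noncomputable def expFactor (i t : ℕ) : K := (s (i + 1) / (2 * (i + 1))) ^ t / t !

noncomputable def expWeight {N : ℕ} (p : Fin N → ℕ) : K := ∏ i, expFactor s i.1 (p i)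

noncomputable def expCoeff (n : ℕ) : K := ∑ p ∈ partitionMults n n, expWeight s p

theorem expWeight_update {N : ℕ} (p : Fin N → ℕ) (a : Fin N) (v : ℕ) :
    expWeight s (update p a v) = expFactor s a v * ∏ i ∈ univ.erase a, expFactor s i.1 (p i) :=
  prod_apply_update (fun i : Fin N => expFactor s i) p a v

theorem expWeight_update_succ [CharZero K] {N : ℕ} (p : Fin N → ℕ) (a : Fin N) :
    (a + 1) * (p a + 1) * expWeight s (update p a (p a + 1)) = expWeight s p * s (a + 1) / 2 := by
  rw [expWeight_update, expWeight, ← mul_prod_erase _ _ (mem_univ a)]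
  simp only [expFactor, factorial_succ, cast_mul, cast_add, cast_one, pow_succ]
  field_simp

theorem expWeight_snoc_zero {N : ℕ} (p : Fin N → ℕ) :
    expWeight s (Fin.snoc p 0 : Fin (N + 1) → ℕ) = expWeight s p := by
  simp [expWeight, Fin.prod_univ_castSucc, expFactor]

theorem apply_last_eq_zero_of_mem_partitionMults {N m : ℕ} (h : m ≤ N) {q : Fin (N + 1) → ℕ}
    (hq : q ∈ partitionMults (N + 1) m) : q (Fin.last N) = 0 := by
  rw [mem_partitionMults, Fin.sum_univ_castSucc, Fin.val_last] at hq
  by_contra hne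
  have := Nat.le_mul_of_pos_right (N + 1) (Nat.pos_of_ne_zero hne)
  omega

theorem sum_partitionMults_succ_expWeight {N m : ℕ} (h : m ≤ N) :
    ∑ q ∈ partitionMults (N + 1) m, expWeight s q = ∑ p ∈ partitionMults N m, expWeight s p := by
  symm
  refine sum_nbij' (fun p => Fin.snoc p 0) (fun q => q ∘ Fin.castSucc)
    (fun p hp => ?_) (fun q hq => ?_) (fun p _ => ?_) (fun q hq => ?_) (fun p _ => ?_)
  · simp_all [mem_partitionMults, Fin.sum_univ_castSucc]
  · have := apply_last_eq_zero_of_mem_partitionMults h hq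
    simp_all [mem_partitionMults, Fin.sum_univ_castSucc]
  · simp
  · have := apply_last_eq_zero_of_mem_partitionMults h hq
    ext i
    refine Fin.lastCases ?_ (fun j => ?_) i <;> simp [this]
  · exact (expWeight_snoc_zero s p).symm

theorem sum_partitionMults_expWeight {N m : ℕ} (h : m ≤ N) :
    ∑ p ∈ partitionMults N m, expWeight s p = expCoeff s m := by
  induction N, h using Nat.le_induction with
  | base => rfl
  | succ N hN ih => rw [sum_partitionMults_succ_expWeight s hN, ih]

theorem expCoeff_one [CharZero K] : expCoeff s 1 = s 1 / 2 := by
  have : partitionMults 1 1 = {fun _ => 1} := by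
    ext p
    simp [mem_partitionMults, funext_iff, Fin.forall_fin_one]
  simp [expCoeff, this, expWeight, expFactor]

theorem succ_mul_expCoeff_succ [CharZero K] (n : ℕ) :
    (n + 1) * expCoeff s (n + 1) = ∑ a : Fin (n + 1), expCoeff s (n - a) * s (a + 1) / 2 := by
  have degree (q) (hq : q ∈ partitionMults (n + 1) (n + 1)) :
      ((n : K) + 1) = ∑ a : Fin (n + 1), ((a : K) + 1) * q a := by
    exact_mod_cast (mem_partitionMults.1 hq).symm
  calc (n + 1) * expCoeff s (n + 1)
      = ∑ a : Fin (n + 1), ∑ q ∈ partitionMults (n + 1) (n + 1) with q a ≠ 0,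
          (a + 1) * q a * expWeight s q := by
        rw [expCoeff, mul_sum, sum_congr rfl fun q hq => by rw [degree q hq, sum_mul], sum_comm]
        refine sum_congr rfl fun a _ => (sum_filter_of_ne fun q _ h => ?_).symm
        exact fun h0 => h (by rw [h0, Nat.cast_zero, mul_zero, zero_mul])
    _ = ∑ a : Fin (n + 1), ∑ r ∈ partitionMults (n + 1) (n - a),
          (a + 1) * (r a + 1) * expWeight s (update r a (r a + 1)) := by
        refine sum_congr rfl fun a _ => ?_
        rw [sum_partitionMults_filter_ne_zero a (by omega), Nat.add_sub_add_right]
        simp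
    _ = _ := by
        refine sum_congr rfl fun a _ => ?_
        simp only [expWeight_update_succ, ← sum_mul, ← sum_div]
        rw [sum_partitionMults_expWeight s (by omega)]

end Algebra

section Derivative

variable {𝕜 : Type*} [NontriviallyNormedField 𝕜] [CharZero 𝕜] {s : 𝕜 → ℕ → 𝕜} {y₀ : 𝕜}

theorem hasDerivAt_expFactor_succ (hs : ∀ k, HasDerivAt (s · k) (k * s y₀ (k + 1)) y₀)
    (i t : ℕ) :
    HasDerivAt (fun y => expFactor (s y) i (t + 1))
      (expFactor (s y₀) i t * s y₀ (i + 2) / 2) y₀ := by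
  refine ((((hs (i + 1)).div_const (2 * (i + 1))).fun_pow (t + 1)).div_const
    ((t + 1) ! : 𝕜)).congr_deriv ?_
  simp only [expFactor, factorial_succ, cast_mul, cast_add, cast_one, add_tsub_cancel_right]
  field_simp

theorem hasDerivAt_expWeight (hs : ∀ k, HasDerivAt (s · k) (k * s y₀ (k + 1)) y₀) {N : ℕ}
    (p : Fin N → ℕ) :
    HasDerivAt (fun y => expWeight (s y) p)
      (∑ j, if p j ≠ 0 then expWeight (s y₀) (update p j (p j - 1)) * s y₀ (j + 2) / 2 else 0)
      y₀ := by
  have factor (j : Fin N) : HasDerivAt (fun y => expFactor (s y) j (p j))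
      (if p j ≠ 0 then expFactor (s y₀) j (p j - 1) * s y₀ (j + 2) / 2 else 0) y₀ := by
    cases p j with
    | zero => simpa [expFactor] using hasDerivAt_const y₀ (1 : 𝕜)
    | succ t => simpa using hasDerivAt_expFactor_succ hs j t
  refine (HasDerivAt.fun_finsetProd fun j _ => factor j).congr_deriv (sum_congr rfl fun j _ => ?_)
  split_ifs
  · rw [expWeight_update, smul_eq_mul]
    ring
  · simp

theorem hasDerivAt_expCoeff (hs : ∀ k, HasDerivAt (s · k) (k * s y₀ (k + 1)) y₀) (n : ℕ) :
    HasDerivAt (fun y => expCoeff (s y) n)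
      (∑ j : Fin n, expCoeff (s y₀) (n - (j + 1)) * s y₀ (j + 2) / 2) y₀ := by
  refine (HasDerivAt.fun_sum fun p _ => hasDerivAt_expWeight hs p).congr_deriv ?_
  rw [sum_comm]
  refine sum_congr rfl fun j _ => ?_
  rw [← sum_filter, sum_partitionMults_filter_ne_zero j (by omega)]
  simp only [update_self, add_tsub_cancel_right, update_idem, update_eq_self]
  rw [← sum_div, ← sum_mul, sum_partitionMults_expWeight _ (by omega)]

end Derivative

theorem hasDerivAt_inv_pow_sub {𝕜 : Type*} [NontriviallyNormedField 𝕜] {a y₀ : 𝕜} (h : y₀ ≠ a)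
    (k : ℕ) :
    HasDerivAt (fun y => ((a - y) ^ k)⁻¹) (k * ((a - y₀) ^ (k + 1))⁻¹) y₀ := by
  have ha : a - y₀ ≠ 0 := sub_ne_zero.2 h.symm
  refine ((((hasDerivAt_id y₀).const_sub a).fun_pow k).fun_inv (pow_ne_zero k ha)).congr_deriv ?_
  rcases k with _ | k
  · simp
  · simp only [id, add_tsub_cancel_right, cast_add, cast_one]
    field_simp
    ring

theorem hasDerivAt_Sig {x y₀ : ℂ} (hy0 : y₀ ≠ 0) (hy1 : y₀ ≠ 1) (hyx : y₀ ≠ x) (k : ℕ) :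
    HasDerivAt (fun y => Sig x y k) (k * Sig x y₀ (k + 1)) y₀ := by
  have h := ((hasDerivAt_inv_pow_sub hy0 k).add (hasDerivAt_inv_pow_sub hy1 k)).add
    (hasDerivAt_inv_pow_sub hyx k)
  simp only [zero_sub] at h
  exact h.congr_deriv (by rw [Sig]; ring)

theorem Lsum_eq_factorial_mul_expCoeff (x y : ℂ) (n : ℕ) :
    Lsum x y n = n ! * expCoeff (Sig x y) n := by
  rw [Lsum, expCoeff, mul_sum]
  refine sum_congr rfl fun p _ => ?_
  rw [mul_div_assoc]
  congr 1
  simp only [expWeight, expFactor, div_pow, mul_pow, prod_div_distrib, prod_mul_distrib,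
    prod_pow_eq_pow_sum]
  ring

theorem stmt3_general (x y0 : ℂ)
    (hy0 : y0 ≠ 0) (hy1 : y0 ≠ 1) (hyx : y0 ≠ x) (n : ℕ) :
    deriv (fun y => Lsum x y n) y0 =
      Lsum x y0 (n + 1) - Lsum x y0 n * Lsum x y0 1 := by
  have hderiv := (hasDerivAt_expCoeff (hasDerivAt_Sig hy0 hy1 hyx) n).const_mul (n ! : ℂ)
  have hrec := succ_mul_expCoeff_succ (Sig x y0) n
  simp only [Fin.sum_univ_succ, Fin.val_zero, Fin.val_succ, Nat.sub_zero, zero_add, add_assoc,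
    Nat.reduceAdd] at hrec
  simp only [Lsum_eq_factorial_mul_expCoeff, hderiv.deriv, expCoeff_one]
  push_cast [factorial_succ]
  linear_combination -(n ! : ℂ) * hrec

/-- Corollary 4.2: `∂_{y₀} L_n = L_{n+1} - L_n L_1` (with `x` held fixed). -/
theorem stmt3 (x y0 : ℂ) (hx0 : x ≠ 0) (hx1 : x ≠ 1)
    (hy0 : y0 ≠ 0) (hy1 : y0 ≠ 1) (hyx : y0 ≠ x) (n : ℕ) :
    deriv (fun y => Lsum x y n) y0 =
      Lsum x y0 (n + 1) - Lsum x y0 n * Lsum x y0 1 :=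
  stmt3_general x y0 hy0 hy1 hyx n
end

section
/- With $L_n$ as the Bell-type polynomial in $\Sigma_k = (-y_0)^{-k}+(1-y_0)^{-k}+(x-y_0)^{-k}$, the partial derivative with respect to $x$ (holding $y_0$ fixed) satisfies $\partial_x L_n = -\tfrac12 \sum_{k=1}^{n} \frac{n!\, L_{n-k}}{(n-k)!\,(x-y_0)^{k+1}}$. -/
/-!
With `b_k = Σ_k / (2k)`, the summand of `L_n` indexed by `p` is `n! ∏_k b_k^{p_k} / p_k!`, a
product of divided powers. Since `(u^{q+1}/(q+1)!)' = u^q/q! · u'`, differentiating it produces,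
for each `k` with `p_k ≥ 1`, the summand indexed by `p - e_k` times `∂_x b_k = -½ (x - y₀)^{-k-1}`.
The map `p ↦ p - e_k` is a bijection from the multi-indices of weighted degree `n` with `p_k ≥ 1`
onto those of weighted degree `n - k`, and these sum to `L_{n-k} / (n-k)!`: a multi-index of
weighted degree `n - k` vanishes beyond coordinate `n - k`, so the length of the tuple does not
matter.
-/

open Finset

def weightedDegree {N : ℕ} (p : Fin N → ℕ) : ℕ :=
  ∑ i, (i.1 + 1) * p i

def weightedIndices (N m : ℕ) : Finset (Fin N → ℕ) :=
  (Fintype.piFinset fun _ : Fin N => range (m + 1)).filter fun p => weightedDegree p = m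

lemma le_weightedDegree {N : ℕ} (p : Fin N → ℕ) (i : Fin N) :
    (i.1 + 1) * p i ≤ weightedDegree p :=
  single_le_sum (f := fun i : Fin N => (i.1 + 1) * p i) (fun _ _ => Nat.zero_le _) (mem_univ i)

lemma mem_weightedIndices {N m : ℕ} {p : Fin N → ℕ} :
    p ∈ weightedIndices N m ↔ weightedDegree p = m := by
  refine ⟨fun hp => (mem_filter.mp hp).2, fun hp => mem_filter.mpr ⟨?_, hp⟩⟩
  refine Fintype.mem_piFinset.mpr fun i => mem_range.mpr (Nat.lt_succ_of_le ?_)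
  exact hp ▸ (Nat.le_mul_of_pos_left _ i.1.succ_pos).trans (le_weightedDegree p i)

lemma weightedDegree_add_single {N : ℕ} (q : Fin N → ℕ) (j : Fin N) :
    weightedDegree (q + Pi.single j 1) = weightedDegree q + (j.1 + 1) := by
  simp [weightedDegree, mul_add, sum_add_distrib, Pi.single_apply]

lemma weightedDegree_snoc_zero {N : ℕ} (q : Fin N → ℕ) :
    weightedDegree (Fin.snoc q 0 : Fin (N + 1) → ℕ) = weightedDegree q := by
  simp [weightedDegree, Fin.sum_univ_castSucc]

lemma sum_filter_weightedIndices_ne_zero {M : Type*} [AddCommMonoid M] {N m : ℕ} {j : Fin N}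
    (hj : j.1 + 1 ≤ m) (f : (Fin N → ℕ) → M) :
    ∑ p ∈ (weightedIndices N m).filter (fun p => p j ≠ 0), f p =
      ∑ q ∈ weightedIndices N (m - (j.1 + 1)), f (q + Pi.single j 1) := by
  have hcancel {p : Fin N → ℕ} (hp : p j ≠ 0) : p - Pi.single j 1 + Pi.single j 1 = p := by
    funext i
    rcases eq_or_ne i j with rfl | hij
    · simp only [Pi.add_apply, Pi.sub_apply, Pi.single_eq_same]; omega
    · simp [Pi.single_eq_of_ne hij]
  refine sum_nbij' (· - Pi.single j 1) (· + Pi.single j 1) ?_ ?_ ?_ ?_ ?_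
  · intro p hp
    simp only [mem_filter, mem_weightedIndices] at hp ⊢
    have := weightedDegree_add_single (p - Pi.single j 1) j
    rw [hcancel hp.2] at this
    omega
  · intro q hq
    simp only [mem_filter, mem_weightedIndices] at hq ⊢
    simp [weightedDegree_add_single, hq, Nat.sub_add_cancel hj]
  · intro p hp
    exact hcancel (mem_filter.mp hp).2
  · intro q _
    exact add_tsub_cancel_right q _
  · intro p hp
    rw [hcancel (mem_filter.mp hp).2]

section DividedPowers

variable {K : Type*} [Field K]

def dividedPowerMonomial {N : ℕ} (b : ℕ → K) (p : Fin N → ℕ) : K :=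
  ∏ i : Fin N, b (i.1 + 1) ^ p i / (p i).factorial

/-- The coefficient of `t ^ m` in `exp (∑ k ∈ Icc 1 N, b k * t ^ k)`. -/
def partitionSum (b : ℕ → K) (N m : ℕ) : K :=
  ∑ p ∈ weightedIndices N m, dividedPowerMonomial b p

lemma dividedPowerMonomial_snoc_zero {N : ℕ} (b : ℕ → K) (q : Fin N → ℕ) :
    dividedPowerMonomial b (Fin.snoc q 0 : Fin (N + 1) → ℕ) = dividedPowerMonomial b q := by
  simp [dividedPowerMonomial, Fin.prod_univ_castSucc]

lemma partitionSum_succ_dim_of_le (b : ℕ → K) {N m : ℕ} (hm : m ≤ N) :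
    partitionSum b (N + 1) m = partitionSum b N m := by
  have hsnoc {p : Fin (N + 1) → ℕ} (hp : weightedDegree p = m) :
      Fin.snoc (Fin.init p) 0 = p := by
    have hp_last := le_weightedDegree p (Fin.last N)
    simp only [Fin.val_last] at hp_last
    have h := Fin.snoc_init_self p
    rwa [show p (Fin.last N) = 0 by nlinarith] at h
  refine sum_nbij' Fin.init (Fin.snoc · 0) ?_ ?_ ?_ ?_ ?_
  · intro p hp
    simp only [mem_weightedIndices] at hp ⊢
    rw [← weightedDegree_snoc_zero, hsnoc hp, hp]
  · intro q hq
    simp only [mem_weightedIndices] at hq ⊢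
    rwa [weightedDegree_snoc_zero]
  · intro p hp
    exact hsnoc (mem_weightedIndices.mp hp)
  · intro q _
    exact Fin.init_snoc (α := fun _ => ℕ) 0 q
  · intro p hp
    rw [← dividedPowerMonomial_snoc_zero b (Fin.init p), hsnoc (mem_weightedIndices.mp hp)]

lemma partitionSum_dim_of_le (b : ℕ → K) {N m : ℕ} (hm : m ≤ N) :
    partitionSum b N m = partitionSum b m m := by
  induction N, hm using Nat.le_induction with
  | base => rfl
  | succ N hmN ih => rw [partitionSum_succ_dim_of_le b hmN, ih]

end DividedPowers

section Derivatives

variable {𝕜 : Type*} [NontriviallyNormedField 𝕜] [CharZero 𝕜]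

lemma HasDerivAt.pow_succ_div_factorial {u : 𝕜 → 𝕜} {u' x : 𝕜} (hu : HasDerivAt u u' x)
    (k : ℕ) :
    HasDerivAt (fun t => u t ^ (k + 1) / (k + 1).factorial) (u x ^ k / k.factorial * u') x := by
  refine ((hu.pow (k + 1)).div_const ((k + 1).factorial : 𝕜)).congr_deriv ?_
  rw [Nat.factorial_succ, Nat.cast_mul, Nat.add_sub_cancel]
  field_simp

lemma hasDerivAt_dividedPowerMonomial {N : ℕ} {b : 𝕜 → ℕ → 𝕜} {b' : ℕ → 𝕜} {x : 𝕜}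
    (hb : ∀ k, HasDerivAt (fun t => b t (k + 1)) (b' (k + 1)) x) (p : Fin N → ℕ) :
    HasDerivAt (fun t => dividedPowerMonomial (b t) p)
      (∑ j, if p j ≠ 0 then
        b' (j.1 + 1) * dividedPowerMonomial (b x) (p - Pi.single j 1) else 0) x := by
  set g : ℕ → ℕ → 𝕜 → 𝕜 := fun k e t => b t k ^ e / e.factorial
  have hg (j : Fin N) : HasDerivAt (g (j.1 + 1) (p j))
      (if p j ≠ 0 then g (j.1 + 1) (p j - 1) x * b' (j.1 + 1) else 0) x := by
    rcases Nat.eq_zero_or_eq_succ_pred (p j) with h | h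
    · simpa [g, h] using hasDerivAt_const x (1 : 𝕜)
    · rw [h]
      simpa [g] using (hb j.1).pow_succ_div_factorial (p j - 1)
  refine (HasDerivAt.fun_finsetProd fun j _ => hg j).congr_deriv (sum_congr rfl fun j _ => ?_)
  split_ifs with hj
  · rw [smul_eq_mul, dividedPowerMonomial, ← mul_prod_erase _ _ (mem_univ j)]
    have hrest : ∏ i ∈ univ.erase j, b x (i.1 + 1) ^ (p - Pi.single j 1 : Fin N → ℕ) i /
        ((p - Pi.single j 1 : Fin N → ℕ) i).factorial =
          ∏ i ∈ univ.erase j, g (i.1 + 1) (p i) x :=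
      prod_congr rfl fun i hi => by simp [g, Pi.single_eq_of_ne (ne_of_mem_erase hi)]
    rw [hrest]
    simp only [Pi.sub_apply, Pi.single_eq_same, g]
    ring
  · simp

lemma hasDerivAt_partitionSum {N m : ℕ} (hNm : N ≤ m) {b : 𝕜 → ℕ → 𝕜} {b' : ℕ → 𝕜} {x : 𝕜}
    (hb : ∀ k, HasDerivAt (fun t => b t (k + 1)) (b' (k + 1)) x) :
    HasDerivAt (fun t => partitionSum (b t) N m)
      (∑ j : Fin N, b' (j.1 + 1) * partitionSum (b x) N (m - (j.1 + 1))) x := by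
  refine (HasDerivAt.fun_sum fun p _ => hasDerivAt_dividedPowerMonomial hb p).congr_deriv ?_
  rw [sum_comm]
  refine sum_congr rfl fun j _ => ?_
  rw [← sum_filter, sum_filter_weightedIndices_ne_zero (by omega), partitionSum, mul_sum]
  simp only [add_tsub_cancel_right]

end Derivatives

lemma Lsum_eq_factorial_mul_partitionSum (x y : ℂ) (n : ℕ) :
    Lsum x y n = n.factorial * partitionSum (fun k => Sig x y k / (2 * k)) n n := by
  rw [Lsum, partitionSum, mul_sum]
  refine sum_congr rfl fun p _ => ?_
  rw [dividedPowerMonomial, ← prod_pow_eq_pow_sum, mul_div_assoc, ← prod_mul_distrib,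
    ← prod_mul_distrib, ← prod_div_distrib]
  congr 1
  refine prod_congr rfl fun i _ => ?_
  push_cast
  rw [div_pow, mul_pow, div_div]
  ring

lemma hasDerivAt_Sig_s4 (y : ℂ) {x : ℂ} (hxy : x ≠ y) (k : ℕ) :
    HasDerivAt (fun t => Sig t y k) (-k * ((x - y) ^ (k + 1))⁻¹) x := by
  have hpow := ((hasDerivAt_id x).sub_const y).pow k
  refine ((hpow.inv (pow_ne_zero k (sub_ne_zero.mpr hxy))).const_add
    (((-y) ^ k)⁻¹ + ((1 - y) ^ k)⁻¹)).congr_deriv ?_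
  rcases k with _ | k
  · simp
  · simp only [id, Pi.pow_apply, Nat.add_sub_cancel]
    field_simp
    ring

theorem stmt4_general (x y0 : ℂ) (hyx : x ≠ y0) (n : ℕ) :
    deriv (fun t => Lsum t y0 n) x =
      -(1 / 2 : ℂ) * ∑ k ∈ Finset.Icc 1 n,
        (n.factorial : ℂ) * Lsum x y0 (n - k) /
          (((n - k).factorial : ℂ) * (x - y0) ^ (k + 1)) := by
  have hb (k : ℕ) : HasDerivAt (fun t => Sig t y0 (k + 1) / (2 * (k + 1 : ℕ)))
      (-(1 / 2) * ((x - y0) ^ (k + 1 + 1))⁻¹) x :=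
    ((hasDerivAt_Sig_s4 y0 hyx (k + 1)).div_const _).congr_deriv (by field_simp)
  have hL := (hasDerivAt_partitionSum (le_refl n) (b := fun t k => Sig t y0 k / (2 * k))
    (b' := fun k => -(1 / 2) * ((x - y0) ^ (k + 1))⁻¹) hb).const_mul (n.factorial : ℂ)
  rw [funext fun t => Lsum_eq_factorial_mul_partitionSum t y0 n, hL.deriv,
    ← Ico_add_one_right_eq_Icc, sum_Ico_eq_sum_range, ← Fin.sum_univ_eq_sum_range, mul_sum,
    mul_sum]
  refine sum_congr rfl fun j _ => ?_
  rw [Lsum_eq_factorial_mul_partitionSum, add_comm 1 j.1,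
    ← partitionSum_dim_of_le _ (Nat.sub_le _ _)]
  field_simp [Nat.factorial_ne_zero]

/-- Lemma 4.2 (first form): `∂_x L_n = -(1/2) ∑_{k=1}^n n! L_{n-k} / ((n-k)! (x-y₀)^{k+1})`,
with `y₀` held fixed. -/
theorem stmt4 (x y0 : ℂ) (hx0 : x ≠ 0) (hx1 : x ≠ 1)
    (hy0 : y0 ≠ 0) (hy1 : y0 ≠ 1) (hyx : x ≠ y0) (n : ℕ) :
    deriv (fun t => Lsum t y0 n) x =
      -(1 / 2 : ℂ) * ∑ k ∈ Finset.Icc 1 n,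
        (n.factorial : ℂ) * Lsum x y0 (n - k) /
          (((n - k).factorial : ℂ) * (x - y0) ^ (k + 1)) :=
  stmt4_general x y0 hyx n
end

section
/- The identity $\frac{\partial L_n}{\partial x} = -\frac{n}{2 f (x-y_0)} \, \partial_{y_0}^{\,n-1}\!\left(\frac{f}{x-y_0}\right)$ holds for all $n \ge 1$, where $f(y_0)=(y_0(y_0-1)(y_0-x))^{-1/2}$, $L_n = f^{(n)}/f$, and the $x$-derivative is taken with $y_0$ held fixed. -/
open Finset

/-! `bellSum S n` is the coefficient of `tⁿ` in `exp (∑ₖ S k tᵏ / (2 k))`, and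
`Lsum x y n = n! Bₙ` with `Bₙ = bellSum (Sig x y) n`. Since `f' / f = Σ₁ / 2` and
`∂_y Σ_k = k Σ_{k+1}`, Leibniz's rule shows that `f⁽ⁿ⁾ / (n! f)` obeys the recursion
`n Bₙ = ∑_{i<n} Σ_{i+1} / 2 · B_{n-1-i}` of these coefficients, so `f⁽ⁿ⁾ = L_n f`.
In `x` only the term `(x - y)⁻ᵏ` of `Σ_k` moves, and `∂ Bₙ / ∂ Σ_{i+1} = B_{n-1-i} / (2 (i + 1))`
(remove one part `i + 1` from a partition of `n`); the Leibniz expansion of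
`∂_y^{n-1} (f / (x - y))` produces the same terms. -/

open scoped Nat ContDiff Topology

/-- `P j` is the multiplicity of the part `j + 1`; the vectors are the `Fin n`-indexed ones
of `Lsum`, extended by zero. -/
noncomputable def partitionMultiplicities (n : ℕ) : Finset (ℕ → ℕ) :=
  open Classical in
  ((Fintype.piFinset fun _ : Fin n => range (n + 1)).filter
      (fun p => ∑ i : Fin n, (i.1 + 1) * p i = n)).image
    (fun p j => if h : j < n then p ⟨j, h⟩ else 0)

lemma mem_partitionMultiplicities {n : ℕ} {P : ℕ → ℕ} :
    P ∈ partitionMultiplicities n ↔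
      (∀ j, n ≤ j → P j = 0) ∧ ∑ j ∈ range n, (j + 1) * P j = n := by
  classical
  simp only [partitionMultiplicities, mem_image, mem_filter, Fintype.mem_piFinset, mem_range]
  constructor
  · rintro ⟨p, ⟨-, hp⟩, rfl⟩
    refine ⟨fun j hj => by simp [hj.not_gt], ?_⟩
    rw [← Fin.sum_univ_eq_sum_range (fun j => (j + 1) * if h : j < n then p ⟨j, h⟩ else 0)]
    simpa using hp
  · rintro ⟨h0, hs⟩
    refine ⟨fun i => P i, ⟨fun i => ?_, ?_⟩, ?_⟩
    · have : (i.1 + 1) * P i ≤ n :=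
        (single_le_sum (f := fun j => (j + 1) * P j) (by simp) (mem_range.2 i.2)).trans hs.le
      nlinarith
    · rw [Fin.sum_univ_eq_sum_range (fun j => (j + 1) * P j), hs]
    · funext j
      by_cases h : j < n
      · simp [h]
      · simp [h, h0 j (not_lt.1 h)]

lemma eq_zero_of_sum_range_mul_eq {N m : ℕ} {P : ℕ → ℕ}
    (hs : ∑ j ∈ range N, (j + 1) * P j = m) {j : ℕ} (hj : j < N) (hmj : m ≤ j) : P j = 0 := by
  have : (j + 1) * P j ≤ m :=
    (single_le_sum (f := fun j => (j + 1) * P j) (by simp) (mem_range.2 hj)).trans hs.le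
  by_contra h
  nlinarith [Nat.one_le_iff_ne_zero.2 h]

lemma mem_partitionMultiplicities_iff_of_le {n N : ℕ} (hN : n ≤ N) {P : ℕ → ℕ} :
    P ∈ partitionMultiplicities n ↔
      (∀ j, N ≤ j → P j = 0) ∧ ∑ j ∈ range N, (j + 1) * P j = n := by
  rw [mem_partitionMultiplicities]
  constructor
  · rintro ⟨h0, hs⟩
    refine ⟨fun j hj => h0 j (hN.trans hj), ?_⟩
    refine (sum_subset (range_subset_range.2 hN) fun j _ hj => ?_).symm.trans hs
    simp [h0 j (not_lt.1 (mem_range.not.1 hj))]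
  · rintro ⟨h0, hs⟩
    have hP : ∀ j, n ≤ j → P j = 0 := fun j hj =>
      if hjN : j < N then eq_zero_of_sum_range_mul_eq hs hjN hj else h0 j (not_lt.1 hjN)
    refine ⟨hP, (sum_subset (range_subset_range.2 hN) fun j _ hj => ?_).trans hs⟩
    simp [hP j (not_lt.1 (mem_range.not.1 hj))]

lemma sum_range_mul_add_single {N i : ℕ} (hi : i < N) (Q : ℕ → ℕ) :
    ∑ j ∈ range N, (j + 1) * (Q + Pi.single i 1 : ℕ → ℕ) j =
      ∑ j ∈ range N, (j + 1) * Q j + (i + 1) := by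
  simp [mul_add, sum_add_distrib, Pi.single_apply, hi]

lemma sub_single_add_single {P : ℕ → ℕ} {i : ℕ} (hP : P i ≠ 0) :
    P - Pi.single i 1 + Pi.single i 1 = P := by
  funext j
  by_cases h : j = i
  · subst h; simp [Nat.sub_add_cancel (Nat.one_le_iff_ne_zero.2 hP)]
  · simp [h]

lemma sum_filter_sub_single {M : Type*} [AddCommMonoid M] (F : (ℕ → ℕ) → M) {n i : ℕ}
    (hi : i < n) :
    ∑ P ∈ (partitionMultiplicities n).filter (fun P => P i ≠ 0), F (P - Pi.single i 1) =
      ∑ Q ∈ partitionMultiplicities (n - 1 - i), F Q := by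
  have hle : n - 1 - i ≤ n := by omega
  refine sum_nbij' (fun P => P - Pi.single i 1) (fun Q => Q + Pi.single i 1) ?_ ?_ ?_ ?_
    (fun _ _ => rfl)
  · intro P hP
    obtain ⟨hmem, hPi⟩ := mem_filter.1 hP
    obtain ⟨h0, hs⟩ := mem_partitionMultiplicities.1 hmem
    have hsum := sum_range_mul_add_single hi (P - Pi.single i 1)
    rw [sub_single_add_single hPi, hs] at hsum
    refine (mem_partitionMultiplicities_iff_of_le hle).2 ⟨fun j hj => ?_, by omega⟩
    simp [h0 j hj]
  · intro Q hQ
    obtain ⟨h0, hs⟩ := (mem_partitionMultiplicities_iff_of_le hle).1 hQ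
    refine mem_filter.2 ⟨mem_partitionMultiplicities.2 ⟨fun j hj => ?_, ?_⟩, by simp⟩
    · simp [h0 j hj, (hi.trans_le hj).ne']
    · rw [sum_range_mul_add_single hi, hs]; omega
  · intro P hP
    exact sub_single_add_single (mem_filter.1 hP).2
  · intro Q _
    simp

section Bell

variable {K : Type*} [Field K]

noncomputable def bellFactor (S : ℕ → K) (j p : ℕ) : K :=
  S (j + 1) ^ p / (2 ^ p * p ! * ((j : K) + 1) ^ p)

/-- The partial derivative of `bellFactor S j p` with respect to `S (j + 1)`. -/
noncomputable def bellFactorDeriv (S : ℕ → K) (j p : ℕ) : K :=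
  p * S (j + 1) ^ (p - 1) / (2 ^ p * p ! * ((j : K) + 1) ^ p)

noncomputable def bellTerm (S : ℕ → K) (N : ℕ) (P : ℕ → ℕ) : K :=
  ∏ j ∈ range N, bellFactor S j (P j)

noncomputable def bellSum (S : ℕ → K) (n : ℕ) : K :=
  ∑ P ∈ partitionMultiplicities n, bellTerm S n P

@[simp]
lemma bellFactor_zero (S : ℕ → K) (j : ℕ) : bellFactor S j 0 = 1 := by
  simp [bellFactor]

@[simp]
lemma bellFactorDeriv_zero (S : ℕ → K) (j : ℕ) : bellFactorDeriv S j 0 = 0 := by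
  simp [bellFactorDeriv]

lemma bellFactorDeriv_mul_self (S : ℕ → K) (j p : ℕ) :
    bellFactorDeriv S j p * S (j + 1) = p * bellFactor S j p := by
  rcases p with _ | p
  · simp
  · simp only [bellFactorDeriv, bellFactor, Nat.add_sub_cancel, pow_succ]
    ring

lemma bellFactorDeriv_succ [CharZero K] (S : ℕ → K) (j p : ℕ) :
    bellFactorDeriv S j (p + 1) = bellFactor S j p / (2 * ((j : K) + 1)) := by
  have hj : (j : K) + 1 ≠ 0 := Nat.cast_add_one_ne_zero j
  simp only [bellFactorDeriv, bellFactor, Nat.add_sub_cancel, Nat.factorial_succ, pow_succ,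
    Nat.cast_mul]
  field_simp

lemma bellTerm_eq_of_le (S : ℕ → K) {m N : ℕ} (hmN : m ≤ N) {P : ℕ → ℕ}
    (hP : ∀ j, m ≤ j → P j = 0) : bellTerm S N P = bellTerm S m P :=
  (prod_subset (range_subset_range.2 hmN) fun j _ hj => by
    rw [hP j (not_lt.1 (mem_range.not.1 hj)), bellFactor_zero]).symm

lemma prod_erase_mul_bellFactorDeriv [CharZero K] (S : ℕ → K) {N i : ℕ} (hi : i ∈ range N)
    {P : ℕ → ℕ} (hPi : P i ≠ 0) :
    (∏ j ∈ (range N).erase i, bellFactor S j (P j)) * bellFactorDeriv S i (P i) =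
      bellTerm S N (P - Pi.single i 1) / (2 * ((i : K) + 1)) := by
  obtain ⟨p, hp⟩ := Nat.exists_eq_add_one_of_ne_zero hPi
  have hP : ∏ j ∈ (range N).erase i, bellFactor S j ((P - Pi.single i 1 : ℕ → ℕ) j) =
      ∏ j ∈ (range N).erase i, bellFactor S j (P j) :=
    prod_congr rfl fun j hj => by simp [ne_of_mem_erase hj]
  rw [bellTerm, ← mul_prod_erase _ _ hi, hP, hp, bellFactorDeriv_succ]
  simp [hp]
  ring

/-- The partial derivative of `bellSum S n` in `S (i + 1)` is
`bellSum S (n - 1 - i) / (2 (i + 1))`. -/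
lemma sum_sum_prod_erase_mul_bellFactorDeriv [CharZero K] (S w : ℕ → K) (n : ℕ) :
    ∑ P ∈ partitionMultiplicities n, ∑ i ∈ range n,
        (∏ j ∈ (range n).erase i, bellFactor S j (P j)) * bellFactorDeriv S i (P i) * w i =
      ∑ i ∈ range n, w i / (2 * ((i : K) + 1)) * bellSum S (n - 1 - i) := by
  rw [sum_comm]
  refine sum_congr rfl fun i hi => ?_
  rw [← sum_filter_of_ne (p := fun P => P i ≠ 0) fun P _ h hPi => h (by simp [hPi]),
    sum_congr rfl fun P hP => by rw [prod_erase_mul_bellFactorDeriv S hi (mem_filter.1 hP).2],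
    sum_filter_sub_single (fun Q => bellTerm S n Q / (2 * ((i : K) + 1)) * w i)
      (mem_range.1 hi), bellSum, mul_sum]
  refine sum_congr rfl fun Q hQ => ?_
  rw [bellTerm_eq_of_le S (by omega) (mem_partitionMultiplicities.1 hQ).1]
  ring

@[simp]
lemma bellSum_zero (S : ℕ → K) : bellSum S 0 = 1 := by
  have : partitionMultiplicities 0 = {0} :=
    eq_singleton_iff_unique_mem.2 ⟨mem_partitionMultiplicities.2 ⟨fun _ _ => rfl, rfl⟩,
      fun P hP => funext fun j => (mem_partitionMultiplicities.1 hP).1 j j.zero_le⟩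
  simp [bellSum, this, bellTerm]

/-- Euler's identity: `bellSum S n` is weighted homogeneous of degree `n` in `S 1, S 2, …`. -/
lemma natCast_mul_bellSum [CharZero K] (S : ℕ → K) (n : ℕ) :
    n * bellSum S n = ∑ i ∈ range n, S (i + 1) / 2 * bellSum S (n - 1 - i) := by
  have hw : ∀ i ∈ range n, S (i + 1) / 2 =
      ((i : K) + 1) * S (i + 1) / (2 * ((i : K) + 1)) := fun i _ => by
    field_simp [Nat.cast_add_one_ne_zero i]
  rw [sum_congr rfl fun i hi => by rw [hw i hi],
    ← sum_sum_prod_erase_mul_bellFactorDeriv, bellSum, mul_sum]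
  refine sum_congr rfl fun P hP => ?_
  have hE : ∀ i ∈ range n,
      (∏ j ∈ (range n).erase i, bellFactor S j (P j)) * bellFactorDeriv S i (P i) *
        (((i : K) + 1) * S (i + 1)) = (((i + 1) * P i : ℕ) : K) * bellTerm S n P := by
    intro i hi
    rw [bellTerm, ← mul_prod_erase _ _ hi, mul_comm (bellFactor S i (P i)),
      mul_assoc, ← mul_assoc (bellFactorDeriv S i (P i)), mul_comm (bellFactorDeriv S i (P i)),
      mul_assoc, bellFactorDeriv_mul_self]
    push_cast
    ring
  rw [sum_congr rfl hE, ← sum_mul, ← Nat.cast_sum, (mem_partitionMultiplicities.1 hP).2]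

end Bell

lemma Lsum_eq_factorial_mul_bellSum (x y : ℂ) (n : ℕ) :
    Lsum x y n = n ! * bellSum (Sig x y) n := by
  classical
  rw [bellSum, partitionMultiplicities,
    sum_image fun p _ q _ h => funext fun i => by simpa using congrFun h i.1, Lsum, mul_sum]
  refine sum_congr rfl fun p _ => ?_
  rw [bellTerm, ← Fin.prod_univ_eq_prod_range
    (fun j => bellFactor (Sig x y) j (if h : j < n then p ⟨j, h⟩ else 0))]
  simp only [Fin.is_lt, dite_true, bellFactor, prod_div_distrib, prod_mul_distrib,
    prod_pow_eq_pow_sum]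
  ring

section Calculus

variable {𝕜 : Type*} [NontriviallyNormedField 𝕜]

lemma hasDerivAt_bellFactor {σ : 𝕜 → ℕ → 𝕜} {x s : 𝕜} {j : ℕ}
    (hσ : HasDerivAt (fun t => σ t (j + 1)) s x) (p : ℕ) :
    HasDerivAt (fun t => bellFactor (σ t) j p) (bellFactorDeriv (σ x) j p * s) x := by
  refine ((hσ.fun_pow p).div_const (2 ^ p * p ! * ((j : 𝕜) + 1) ^ p)).congr_deriv ?_
  simp only [bellFactorDeriv]
  ring

lemma hasDerivAt_bellSum [CharZero 𝕜] {σ : 𝕜 → ℕ → 𝕜} {σ' : ℕ → 𝕜} {x : 𝕜}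
    (hσ : ∀ j, HasDerivAt (fun t => σ t (j + 1)) (σ' j) x) (n : ℕ) :
    HasDerivAt (fun t => bellSum (σ t) n)
      (∑ i ∈ range n, σ' i / (2 * ((i : 𝕜) + 1)) * bellSum (σ x) (n - 1 - i)) x := by
  rw [← sum_sum_prod_erase_mul_bellFactorDeriv]
  refine HasDerivAt.fun_sum fun P _ => ?_
  refine (HasDerivAt.fun_finsetProd fun j (_ : j ∈ range n) =>
    hasDerivAt_bellFactor (hσ j) (P j)).congr_deriv ?_
  simp only [smul_eq_mul, mul_assoc]

lemma iteratedDeriv_inv_const_sub (c : 𝕜) (m : ℕ) (z : 𝕜) :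
    iteratedDeriv m (fun z => (c - z)⁻¹) z = m ! * ((c - z) ^ (m + 1))⁻¹ := by
  rw [iteratedDeriv_comp_const_sub m Inv.inv c, iteratedDeriv_eq_iterate]
  have : (-1 - m : ℤ) = -((m + 1 : ℕ) : ℤ) := by push_cast; ring
  simp only [iter_deriv_inv, smul_eq_mul, this, zpow_neg, zpow_natCast, ← mul_assoc, ← mul_pow]
  norm_num

lemma iteratedDeriv_div_const_sub {f : 𝕜 → 𝕜} {c y : 𝕜} {m : ℕ} (hf : ContDiffAt 𝕜 m f y)
    (hyc : y ≠ c) :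
    iteratedDeriv m (fun z => f z / (c - z)) y = ∑ j ∈ range (m + 1),
      m.choose j * (j ! * ((c - y) ^ (j + 1))⁻¹) * iteratedDeriv (m - j) f y := by
  simp only [div_eq_inv_mul]
  rw [iteratedDeriv_fun_mul (f := fun z => (c - z)⁻¹)
    ((contDiffAt_const.sub contDiffAt_id).inv (sub_ne_zero.2 hyc.symm)) hf]
  simp only [iteratedDeriv_inv_const_sub]

lemma HasDerivAt.eq_of_sq_mul_eventuallyEq_one {f g : 𝕜 → 𝕜} {f' g' y : 𝕜}
    (hf : HasDerivAt f f' y) (hg : HasDerivAt g g' y) (h : ∀ᶠ z in 𝓝 y, f z ^ 2 * g z = 1) :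
    2 * f' * g y = -(f y * g') := by
  have hy : f y ^ 2 * g y = 1 := h.self_of_nhds
  have hderiv : 2 * f y * f' * g y + f y ^ 2 * g' = 0 := by
    simpa using
      ((hf.fun_pow 2).mul hg).unique ((hasDerivAt_const y (1 : 𝕜)).congr_of_eventuallyEq h)
  linear_combination (f y * g y) * hderiv - (2 * f' * g y + f y * g') * hy

lemma iteratedDeriv_eq_factorial_mul_bellSum_mul [CharZero 𝕜] {U : Set 𝕜} (hU : IsOpen U)
    {f h : 𝕜 → 𝕜} (hf : ContDiffOn 𝕜 ∞ f U) (hh : ContDiffOn 𝕜 ∞ h U)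
    (hfh : ∀ y ∈ U, deriv f y = h y * f y)
    {S : 𝕜 → ℕ → 𝕜} (hS : ∀ y ∈ U, ∀ j, iteratedDeriv j h y = j ! * S y (j + 1) / 2) (m : ℕ)
    {y : 𝕜} (hy : y ∈ U) : iteratedDeriv m f y = m ! * bellSum (S y) m * f y := by
  induction m using Nat.strong_induction_on generalizing y with
  | _ m ih =>
  rcases m with _ | m
  · simp
  have hderiv : deriv f =ᶠ[𝓝 y] fun z => h z * f z :=
    Filter.eventually_of_mem (hU.mem_nhds hy) hfh
  have hterm : ∀ j ∈ range (m + 1), (m.choose j : 𝕜) * iteratedDeriv j h y *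
      iteratedDeriv (m - j) f y = m ! * f y * (S y (j + 1) / 2 * bellSum (S y) (m - j)) := by
    intro j hj
    have hjm : j ≤ m := Nat.lt_succ_iff.1 (mem_range.1 hj)
    rw [hS y hy, ih (m - j) (by omega) hy, ← Nat.choose_mul_factorial_mul_factorial hjm]
    push_cast
    ring
  rw [iteratedDeriv_succ', hderiv.iteratedDeriv_eq,
    iteratedDeriv_fun_mul ((hh.contDiffAt (hU.mem_nhds hy)).of_le (by exact_mod_cast le_top))
      ((hf.contDiffAt (hU.mem_nhds hy)).of_le (by exact_mod_cast le_top)),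
    sum_congr rfl hterm, ← mul_sum]
  have hrec := natCast_mul_bellSum (S y) (m + 1)
  simp only [Nat.add_sub_cancel] at hrec
  rw [← hrec, Nat.factorial_succ]
  push_cast
  ring

end Calculus

lemma iteratedDeriv_Sig_one {x y : ℂ} (hy0 : y ≠ 0) (hy1 : y ≠ 1) (hyx : y ≠ x) (m : ℕ) :
    iteratedDeriv m (fun z => Sig x z 1) y = m ! * Sig x y (m + 1) := by
  have hSig : (fun z => Sig x z 1) = fun z => (0 - z)⁻¹ + (1 - z)⁻¹ + (x - z)⁻¹ := by
    funext z; simp [Sig]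
  have hinv : ∀ c : ℂ, y ≠ c → ContDiffAt ℂ m (fun z => (c - z)⁻¹) y := fun c hc =>
    (contDiffAt_const.sub contDiffAt_id).inv (sub_ne_zero.2 hc.symm)
  rw [hSig, iteratedDeriv_fun_add ((hinv 0 hy0).add (hinv 1 hy1)) (hinv x hyx),
    iteratedDeriv_fun_add (hinv 0 hy0) (hinv 1 hy1)]
  simp only [iteratedDeriv_inv_const_sub, Sig]
  ring

lemma differentiableAt_Sig_one {x y : ℂ} (hy0 : y ≠ 0) (hy1 : y ≠ 1) (hyx : y ≠ x) :
    DifferentiableAt ℂ (fun z => Sig x z 1) y := by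
  have h0 : -y ≠ 0 := neg_ne_zero.2 hy0
  have h1 : 1 - y ≠ 0 := sub_ne_zero.2 hy1.symm
  have hx : x - y ≠ 0 := sub_ne_zero.2 hyx.symm
  simp only [Sig, pow_one]
  fun_prop (disch := assumption)

lemma hasDerivAt_Sig_left {x y : ℂ} (hxy : x ≠ y) (k : ℕ) :
    HasDerivAt (fun t => Sig t y (k + 1)) (-(((k : ℂ) + 1) * ((x - y) ^ (k + 2))⁻¹)) x := by
  have hxy' : x - y ≠ 0 := sub_ne_zero.2 hxy
  refine ((((hasDerivAt_id' x).sub_const y).fun_pow (k + 1)).fun_inv (pow_ne_zero _ hxy')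
    |>.const_add (((-y) ^ (k + 1))⁻¹ + ((1 - y) ^ (k + 1))⁻¹)).congr_deriv ?_
  field_simp
  push_cast
  ring

lemma deriv_eq_Sig_mul {x y : ℂ} {f : ℂ → ℂ} (hf : DifferentiableAt ℂ f y)
    (hbranch : ∀ᶠ z in 𝓝 y, f z ^ 2 * (z * (z - 1) * (z - x)) = 1)
    (hy0 : y ≠ 0) (hy1 : y ≠ 1) (hyx : y ≠ x) :
    deriv f y = Sig x y 1 / 2 * f y := by
  have hg : HasDerivAt (fun z : ℂ => z * (z - 1) * (z - x))
      ((y - 1) * (y - x) + y * (y - x) + y * (y - 1)) y := by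
    refine (((hasDerivAt_id' y).fun_mul ((hasDerivAt_id' y).sub_const 1)).fun_mul
      ((hasDerivAt_id' y).sub_const x)).congr_deriv ?_
    ring
  have h := hf.hasDerivAt.eq_of_sq_mul_eventuallyEq_one hg hbranch
  have h1 : (1 : ℂ) - y ≠ 0 := sub_ne_zero.2 hy1.symm
  have hx : x - y ≠ 0 := sub_ne_zero.2 hyx.symm
  rw [Sig]
  field_simp
  linear_combination h

lemma iteratedDeriv_eq_Lsum_mul {x : ℂ} {U : Set ℂ} (hU : IsOpen U)
    (hUavoid : ∀ z ∈ U, z ≠ 0 ∧ z ≠ 1 ∧ z ≠ x) {f : ℂ → ℂ} (hf : DifferentiableOn ℂ f U)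
    (hbranch : ∀ z ∈ U, f z ^ 2 * (z * (z - 1) * (z - x)) = 1) (k : ℕ) {y : ℂ} (hy : y ∈ U) :
    iteratedDeriv k f y = Lsum x y k * f y := by
  have hSig : DifferentiableOn ℂ (fun z => Sig x z 1 / 2) U := fun z hz =>
    ((differentiableAt_Sig_one (hUavoid z hz).1 (hUavoid z hz).2.1
      (hUavoid z hz).2.2).div_const 2).differentiableWithinAt
  rw [Lsum_eq_factorial_mul_bellSum]
  refine iteratedDeriv_eq_factorial_mul_bellSum_mul hU (hf.contDiffOn hU) (hSig.contDiffOn hU)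
    (fun z hz => ?_) (fun z hz j => ?_) k hy
  all_goals obtain ⟨hz0, hz1, hzx⟩ := hUavoid z hz
  · exact deriv_eq_Sig_mul (hf.differentiableAt (hU.mem_nhds hz))
      (Filter.eventually_of_mem (hU.mem_nhds hz) hbranch) hz0 hz1 hzx
  · rw [iteratedDeriv_div_const, iteratedDeriv_Sig_one hz0 hz1 hzx]

lemma hasDerivAt_Lsum_left {x y : ℂ} (hxy : x ≠ y) (n : ℕ) :
    HasDerivAt (fun t => Lsum t y n)
      (-(n ! / 2) * ∑ i ∈ range n, ((x - y) ^ (i + 2))⁻¹ * bellSum (Sig x y) (n - 1 - i)) x := by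
  simp only [Lsum_eq_factorial_mul_bellSum]
  refine ((hasDerivAt_bellSum (hasDerivAt_Sig_left hxy) n).const_mul _).congr_deriv ?_
  rw [mul_sum, mul_sum]
  refine sum_congr rfl fun i _ => ?_
  field_simp [Nat.cast_add_one_ne_zero i]

theorem stmt7_general (x : ℂ)
    (U : Set ℂ) (hU : IsOpen U)
    (hUavoid : ∀ z ∈ U, z ≠ 0 ∧ z ≠ 1 ∧ z ≠ x)
    (f : ℂ → ℂ) (hf : DifferentiableOn ℂ f U)
    (hbranch : ∀ z ∈ U, (f z) ^ 2 * (z * (z - 1) * (z - x)) = 1)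
    (y0 : ℂ) (hy : y0 ∈ U) (n : ℕ) (hn : 1 ≤ n) :
    deriv (fun t => Lsum t y0 n) x =
      -((n : ℂ) / (2 * f y0 * (x - y0))) *
        iteratedDeriv (n - 1) (fun y => f y / (x - y)) y0 := by
  obtain ⟨m, rfl⟩ := Nat.exists_eq_add_of_le' hn
  have hyx : y0 ≠ x := (hUavoid y0 hy).2.2
  have hxy : x - y0 ≠ 0 := sub_ne_zero.2 hyx.symm
  have hf0 : f y0 ≠ 0 := by
    rintro h
    simpa [h] using hbranch y0 hy
  rw [(hasDerivAt_Lsum_left hyx.symm (m + 1)).deriv, Nat.add_sub_cancel,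
    iteratedDeriv_div_const_sub ((hf.contDiffOn hU).contDiffAt (hU.mem_nhds hy)) hyx,
    mul_sum, mul_sum]
  refine sum_congr rfl fun j hj => ?_
  have hfac : ((m + 1) ! : ℂ) = (m + 1) * (m.choose j * j ! * (m - j) ! : ℕ) := by
    rw [Nat.choose_mul_factorial_mul_factorial (Nat.lt_succ_iff.1 (mem_range.1 hj)),
      Nat.factorial_succ]
    push_cast
    ring
  rw [iteratedDeriv_eq_Lsum_mul hU hUavoid hf hbranch _ hy, Lsum_eq_factorial_mul_bellSum, hfac]
  push_cast
  field_simp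
  ring

/-- Lemma 4.2 (second form): for `n ≥ 1`,
`∂_x L_n = -(n/(2 f (x-y₀))) ∂_{y₀}^{n-1} (f/(x-y₀))`, with `y₀` held fixed in
the `x`-derivative. -/
theorem stmt7 (x : ℂ) (hx0 : x ≠ 0) (hx1 : x ≠ 1)
    (U : Set ℂ) (hU : IsOpen U)
    (hUavoid : ∀ z ∈ U, z ≠ 0 ∧ z ≠ 1 ∧ z ≠ x)
    (f : ℂ → ℂ) (hf : DifferentiableOn ℂ f U)
    (hbranch : ∀ z ∈ U, (f z) ^ 2 * (z * (z - 1) * (z - x)) = 1)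
    (y0 : ℂ) (hy : y0 ∈ U) (n : ℕ) (hn : 1 ≤ n) :
    deriv (fun t => Lsum t y0 n) x =
      -((n : ℂ) / (2 * f y0 * (x - y0))) *
        iteratedDeriv (n - 1) (fun y => f y / (x - y)) y0 :=
  stmt7_general x U hU hUavoid f hf hbranch y0 hy n hn
end
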